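/- Uniform ultimate boundedness with constant gains and references (Corollary 1). Let θ : ℝ → ℝⁿ be continuously differentiable with bounded derivative, and let k_i > 0 and V_i^* > 0 be constants; set b_i = k_i V_i^*. Consider solutions of τ_i V̇_i(t) = V_i(t) [ (Ψ(θ(t)) V(t))_i + b_i ] with V(t₀) ∈ ℝⁿ₊. Then the system is uniformly bounded (for every R₁ > 0 there exists R₂(R₁) > 0 such that ‖V(t₀)‖ ≤ R₁ implies ‖V(t)‖ ≤ R₂(R₁) for all t ≥ t₀ and all t₀) and uniformly ultimately bounded (there exists R > 0 such that for every R₁ > 0 there exists T(R₁) > 0 with ‖V(t₀)‖ ≤ R₁ implying ‖V(t)‖ ≤ R for all t ≥ t₀ + T(R₁) and all t₀). -/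

import Mathlib

/-!
On the nonnegative orthant the weighted sum `W = ∑ τᵢ Vᵢ` is comparable to `‖V‖`, and along a
solution `Ẇ = Vᵀ Ψ V + bᵀ V`. The conductance part of `Ψ` is antisymmetric, so it drops out of the
quadratic form, and the susceptance part is dominated by the diagonal; hence
`Vᵀ Ψ V ≤ -κ ‖V‖²` for any `κ ≤ minᵢ kᵢ`, and `Ẇ ≤ -ρ` as soon as `W` exceeds a fixed level `m`.
Such a `W` never rises above `max (W t₀) m` and falls below `m` within time `(W t₀ - m) / ρ`.
The orthant is invariant because each `Vᵢ` solves a scalar linear equation `V̇ᵢ = gᵢ(t) Vᵢ` with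
locally bounded `gᵢ`: by Grönwall, once `Vᵢ` vanishes it stays zero, so it cannot change sign.
-/

open Finset Matrix

/-- Euclidean norm on `Fin n → ℝ`. -/
noncomputable def euclNorm {n : ℕ} (x : Fin n → ℝ) : ℝ :=
  Real.sqrt (∑ i, x i ^ 2)

/-- A solution of the constant-gain quadratic-droop network
`τᵢ V̇ᵢ = Vᵢ ((Ψ(t) V)ᵢ + bᵢ)` starting in the nonnegative orthant at time `t₀`. -/
def IsConstNetSolution {n : ℕ} (τ : Fin n → ℝ) (Ψ : ℝ → Matrix (Fin n) (Fin n) ℝ)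
    (b : Fin n → ℝ) (t₀ : ℝ) (V : ℝ → Fin n → ℝ) : Prop :=
  (∀ i, 0 ≤ V t₀ i) ∧
  ∀ i, ∀ t ∈ Set.Ici t₀,
    HasDerivAt (fun s => V s i)
      (V t i * ((Ψ t).mulVec (V t) i + b i) / τ i) t

lemma exists_pos_forall_le {ι : Type*} [Finite ι] {f : ι → ℝ} (hf : ∀ i, 0 < f i) :
    ∃ c > 0, ∀ i, c ≤ f i := by
  cases isEmpty_or_nonempty ι with
  | inl _ => exact ⟨1, one_pos, isEmptyElim⟩
  | inr _ =>
    obtain ⟨i₀, hi₀⟩ := Finite.exists_min f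
    exact ⟨f i₀, hf i₀, hi₀⟩

section EuclNorm

variable {n : ℕ}

lemma euclNorm_nonneg (x : Fin n → ℝ) : 0 ≤ euclNorm x :=
  Real.sqrt_nonneg _

lemma sq_euclNorm (x : Fin n → ℝ) : euclNorm x ^ 2 = ∑ i, x i ^ 2 :=
  Real.sq_sqrt (sum_nonneg fun i _ => sq_nonneg (x i))

lemma dotProduct_le_euclNorm_mul (x y : Fin n → ℝ) : x ⬝ᵥ y ≤ euclNorm x * euclNorm y :=
  Real.sum_mul_le_sqrt_mul_sqrt univ x y

lemma euclNorm_le_sum_of_nonneg {x : Fin n → ℝ} (hx : ∀ i, 0 ≤ x i) : euclNorm x ≤ ∑ i, x i :=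
  Real.sqrt_le_iff.2 ⟨sum_nonneg fun i _ => hx i, sum_sq_le_sq_sum_of_nonneg fun i _ => hx i⟩

lemma mul_euclNorm_le_dotProduct {c : ℝ} {w x : Fin n → ℝ} (hc : 0 ≤ c) (hcw : ∀ i, c ≤ w i)
    (hx : ∀ i, 0 ≤ x i) : c * euclNorm x ≤ w ⬝ᵥ x :=
  calc c * euclNorm x ≤ c * ∑ i, x i :=
        mul_le_mul_of_nonneg_left (euclNorm_le_sum_of_nonneg hx) hc
    _ = ∑ i, c * x i := mul_sum _ _ _
    _ ≤ w ⬝ᵥ x := sum_le_sum fun i _ => mul_le_mul_of_nonneg_right (hcw i) (hx i)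

end EuclNorm

lemma dotProduct_mulVec_self_le {ι : Type*} [Fintype ι] [DecidableEq ι] (A : Matrix ι ι ℝ)
    (x : ι → ℝ) :
    x ⬝ᵥ A *ᵥ x ≤ ∑ i, (A i i + ∑ j ∈ univ.erase i, |A i j + A j i| / 2) * x i ^ 2 := by
  set S : ι → ι → ℝ := fun i j => (A i j + A j i) / 2
  have hsymm : x ⬝ᵥ A *ᵥ x = ∑ i, ∑ j, S i j * (x i * x j) := by
    have hA : x ⬝ᵥ A *ᵥ x = ∑ i, ∑ j, A i j * (x i * x j) := by
      simp only [dotProduct, mulVec, mul_sum]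
      exact sum_congr rfl fun i _ => sum_congr rfl fun j _ => by ring
    have hAt : x ⬝ᵥ A *ᵥ x = ∑ i, ∑ j, A j i * (x i * x j) := by
      rw [hA, sum_comm]
      exact sum_congr rfl fun i _ => sum_congr rfl fun j _ => by ring
    simp only [S, add_div, add_mul, sum_add_distrib, div_mul_eq_mul_div, ← sum_div, ← hA, ← hAt]
    ring
  have hdiag : ∀ i, S i i * (x i * x i) = A i i * x i ^ 2 := fun i => by simp only [S]; ring
  have hoff : ∀ i j, S i j * (x i * x j) ≤ |S i j| * x i ^ 2 / 2 + |S i j| * x j ^ 2 / 2 := by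
    intro i j
    nlinarith [neg_abs_le (S i j), le_abs_self (S i j),
      mul_nonneg (abs_nonneg (S i j)) (sq_nonneg (x i - x j)),
      mul_nonneg (abs_nonneg (S i j)) (sq_nonneg (x i + x j))]
  have hswap : ∑ i, ∑ j ∈ univ.erase i, |S i j| * x j ^ 2 / 2
      = ∑ i, ∑ j ∈ univ.erase i, |S i j| * x i ^ 2 / 2 := by
    rw [sum_comm' (s' := fun j => univ.erase j) (t' := univ) (by simp [ne_comm])]
    exact sum_congr rfl fun i _ => sum_congr rfl fun j _ => by simp only [S, add_comm]
  calc x ⬝ᵥ A *ᵥ x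
      = ∑ i, (A i i * x i ^ 2 + ∑ j ∈ univ.erase i, S i j * (x i * x j)) := by
        rw [hsymm]
        exact sum_congr rfl fun i _ => by
          rw [← hdiag]; exact (add_sum_erase univ _ (mem_univ i)).symm
    _ ≤ ∑ i, (A i i * x i ^ 2 + ∑ j ∈ univ.erase i,
          (|S i j| * x i ^ 2 / 2 + |S i j| * x j ^ 2 / 2)) := by
        gcongr with i _ j _
        exact hoff i j
    _ = ∑ i, (A i i * x i ^ 2 + ∑ j ∈ univ.erase i, |S i j| * x i ^ 2 / 2)
          + ∑ i, ∑ j ∈ univ.erase i, |S i j| * x j ^ 2 / 2 := by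
        simp only [sum_add_distrib]; ring
    _ = ∑ i, (A i i + ∑ j ∈ univ.erase i, |A i j + A j i| / 2) * x i ^ 2 := by
        rw [hswap, ← sum_add_distrib]
        refine sum_congr rfl fun i _ => ?_
        rw [add_mul, sum_mul, add_assoc, ← sum_add_distrib]
        congr 1
        refine sum_congr rfl fun j _ => ?_
        simp only [S, abs_div, abs_two]
        ring

section NetworkMatrix

variable {n : ℕ} {B G : Fin n → Fin n → ℝ} {Bsh k θ : Fin n → ℝ} {A : Matrix (Fin n) (Fin n) ℝ}

lemma network_dotProduct_mulVec_self_le {κ : ℝ} (hBsymm : ∀ i j, B i j = B j i)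
    (hGsymm : ∀ i j, G i j = G j i) (hBsh : ∀ i, 0 ≤ Bsh i) (hκ : ∀ i, κ ≤ k i)
    (hdiag : ∀ i, A i i = -((Bsh i + ∑ j ∈ univ.erase i, |B i j|) + k i))
    (hoff : ∀ i j, i ≠ j →
      A i j = G i j * Real.sin (θ i - θ j) + |B i j| * Real.cos (θ i - θ j))
    (x : Fin n → ℝ) : x ⬝ᵥ A *ᵥ x ≤ -κ * euclNorm x ^ 2 := by
  have hsymm : ∀ i j, i ≠ j → |A i j + A j i| / 2 ≤ |B i j| := by
    intro i j hij
    rw [hoff i j hij, hoff j i hij.symm, hGsymm j i, hBsymm j i, ← neg_sub (θ i) (θ j),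
      Real.sin_neg, Real.cos_neg]
    calc |G i j * Real.sin (θ i - θ j) + |B i j| * Real.cos (θ i - θ j)
          + (G i j * -Real.sin (θ i - θ j) + |B i j| * Real.cos (θ i - θ j))| / 2
        = |B i j| * |Real.cos (θ i - θ j)| := by
          rw [show ∀ u v : ℝ, u * v + |B i j| * Real.cos (θ i - θ j)
              + (u * -v + |B i j| * Real.cos (θ i - θ j)) = 2 * (|B i j| * Real.cos (θ i - θ j))
              from fun _ _ => by ring, abs_mul, abs_mul, abs_two, abs_abs]
          ring
      _ ≤ |B i j| := mul_le_of_le_one_right (abs_nonneg _) (Real.abs_cos_le_one _)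
  have hrow : ∀ i, A i i + ∑ j ∈ univ.erase i, |A i j + A j i| / 2 ≤ -κ := by
    intro i
    have := sum_le_sum (s := univ.erase i) fun j hj => hsymm i j (ne_of_mem_erase hj).symm
    linarith [hdiag i, hBsh i, hκ i]
  calc x ⬝ᵥ A *ᵥ x ≤ ∑ i, (A i i + ∑ j ∈ univ.erase i, |A i j + A j i| / 2) * x i ^ 2 :=
        dotProduct_mulVec_self_le A x
    _ ≤ ∑ i, -κ * x i ^ 2 := sum_le_sum fun i _ => mul_le_mul_of_nonneg_right (hrow i) (sq_nonneg _)
    _ = -κ * euclNorm x ^ 2 := by rw [sq_euclNorm, mul_sum]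

lemma network_abs_apply_le
    (hdiag : ∀ i, A i i = -((Bsh i + ∑ j ∈ univ.erase i, |B i j|) + k i))
    (hoff : ∀ i j, i ≠ j →
      A i j = G i j * Real.sin (θ i - θ j) + |B i j| * Real.cos (θ i - θ j))
    (i j : Fin n) :
    |A i j| ≤ |(Bsh i + ∑ l ∈ univ.erase i, |B i l|) + k i| + (|G i j| + |B i j|) := by
  rcases eq_or_ne i j with rfl | hij
  · rw [hdiag, abs_neg]
    exact le_add_of_nonneg_right (by positivity)
  · rw [hoff i j hij]
    refine le_add_of_nonneg_of_le (abs_nonneg _) ((abs_add_le _ _).trans (add_le_add ?_ ?_))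
    · rw [abs_mul]; exact mul_le_of_le_one_right (abs_nonneg _) (Real.abs_sin_le_one _)
    · rw [abs_mul, abs_abs]; exact mul_le_of_le_one_right (abs_nonneg _) (Real.abs_cos_le_one _)

end NetworkMatrix

lemma dotProduct_mulVec_add_le_neg {n : ℕ} {A : Matrix (Fin n) (Fin n) ℝ} {x b τ : Fin n → ℝ}
    {κ ρ m : ℝ} (hA : x ⬝ᵥ A *ᵥ x ≤ -κ * euclNorm x ^ 2) (hκ : 0 ≤ κ)
    (hρ : euclNorm b + 1 ≤ κ * ρ) (hm : euclNorm τ * ρ < m) (hx : m ≤ τ ⬝ᵥ x) :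
    x ⬝ᵥ (A *ᵥ x + b) ≤ -ρ := by
  have hρx : ρ ≤ euclNorm x := by
    by_contra! h
    have := mul_le_mul_of_nonneg_left h.le (euclNorm_nonneg τ)
    linarith [dotProduct_le_euclNorm_mul τ x]
  have hκx : euclNorm b + 1 ≤ κ * euclNorm x := hρ.trans (mul_le_mul_of_nonneg_left hρx hκ)
  rw [dotProduct_add]
  nlinarith [dotProduct_le_euclNorm_mul x b, euclNorm_nonneg x]

lemma nonneg_of_hasDerivAt_mul {f g : ℝ → ℝ} {t₀ : ℝ}
    (hf : ∀ t ≥ t₀, HasDerivAt f (f t * g t) t) (hg : ∀ T, ∃ K, ∀ t ∈ Set.Icc t₀ T, |g t| ≤ K)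
    (h₀ : 0 ≤ f t₀) : ∀ t ≥ t₀, 0 ≤ f t := by
  intro t₁ ht₁
  by_contra! hneg
  have hcont : ContinuousOn f (Set.Icc t₀ t₁) := fun t ht =>
    (hf t ht.1).continuousAt.continuousWithinAt
  obtain ⟨s, hs, hfs⟩ : ∃ s ∈ Set.Icc t₀ t₁, f s = 0 :=
    intermediate_value_Icc' ht₁ hcont ⟨hneg.le, h₀⟩
  obtain ⟨K, hK⟩ := hg t₁
  have hzero := eq_zero_of_abs_deriv_le_mul_abs_self_of_eq_zero_right (K := K)
    (hcont.mono (Set.Icc_subset_Icc_left hs.1))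
    (fun t ht => (hf t (hs.1.trans ht.1)).hasDerivWithinAt) hfs
    (fun t ht => by
      rw [Real.norm_eq_abs, Real.norm_eq_abs, abs_mul, mul_comm]
      exact mul_le_mul_of_nonneg_right (hK t ⟨hs.1.trans ht.1, ht.2.le⟩) (abs_nonneg _))
    t₁ ⟨hs.2, le_rfl⟩
  exact hneg.ne hzero

lemma le_max_of_hasDerivAt_neg_above {W W' : ℝ → ℝ} {t₀ m : ℝ}
    (hW : ∀ t ≥ t₀, HasDerivAt W (W' t) t) (hW' : ∀ t ≥ t₀, m ≤ W t → W' t < 0) :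
    ∀ t ≥ t₀, W t ≤ max (W t₀) m := fun _ ht =>
  image_le_of_deriv_right_lt_deriv_boundary' (B := fun _ => max (W t₀) m) (B' := fun _ => 0)
    (fun s hs => (hW s hs.1).continuousAt.continuousWithinAt)
    (fun s hs => (hW s hs.1).hasDerivWithinAt) (le_max_left _ _) continuousOn_const
    (fun _ _ => hasDerivWithinAt_const _ _ _)
    (fun s hs hWs => hW' s hs.1 (hWs ▸ le_max_right _ _)) ⟨ht, le_rfl⟩

lemma le_of_hasDerivAt_le_neg_above {W W' : ℝ → ℝ} {t₀ m d T : ℝ}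
    (hW : ∀ t ≥ t₀, HasDerivAt W (W' t) t) (hW' : ∀ t ≥ t₀, m ≤ W t → W' t ≤ -d)
    (hd : 0 < d) (hT : 0 ≤ T) (hWT : W t₀ - m ≤ d * T) : ∀ t ≥ t₀ + T, W t ≤ m := by
  obtain ⟨s, hs, hWs⟩ : ∃ s ∈ Set.Icc t₀ (t₀ + T), W s ≤ m := by
    by_contra! hgt
    have hB : ∀ t, HasDerivAt (fun t => W t₀ - d * (t - t₀)) (-d) t := fun t => by
      simpa using ((hasDerivAt_id t).sub_const t₀).const_mul d |>.const_sub (W t₀)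
    have hdecay := image_le_of_deriv_right_le_deriv_boundary (B' := fun _ => -d)
      (fun t ht => (hW t ht.1).continuousAt.continuousWithinAt)
      (fun t ht => (hW t ht.1).hasDerivWithinAt) (by simp)
      (fun t _ => (hB t).continuousAt.continuousWithinAt) (fun t _ => (hB t).hasDerivWithinAt)
      (fun t ht => hW' t ht.1 (hgt t ⟨ht.1, ht.2.le⟩).le) ⟨le_add_of_nonneg_right hT, le_rfl⟩
    have := hgt (t₀ + T) ⟨le_add_of_nonneg_right hT, le_rfl⟩
    simp only [add_sub_cancel_left] at hdecay
    linarith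
  intro t ht
  have := le_max_of_hasDerivAt_neg_above (fun t ht => hW t (hs.1.trans ht))
    (fun t ht hm => (hW' t (hs.1.trans ht) hm).trans_lt (neg_neg_of_pos hd)) t (hs.2.trans ht)
  rwa [max_eq_right hWs] at this

namespace IsConstNetSolution

variable {n : ℕ} {τ b : Fin n → ℝ} {Ψ : ℝ → Matrix (Fin n) (Fin n) ℝ} {t₀ : ℝ}
  {V : ℝ → Fin n → ℝ}

lemma nonneg {M : Matrix (Fin n) (Fin n) ℝ} (hV : IsConstNetSolution τ Ψ b t₀ V)
    (hM : ∀ t i j, |Ψ t i j| ≤ M i j) : ∀ t ≥ t₀, ∀ i, 0 ≤ V t i := by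
  intro t ht i
  refine nonneg_of_hasDerivAt_mul (g := fun s => ((Ψ s *ᵥ V s) i + b i) / τ i)
    (fun s hs => by simpa only [mul_div_assoc] using hV.2 i s hs) (fun T => ?_) (hV.1 i) t ht
  have hVcont : ContinuousOn V (Set.Icc t₀ T) :=
    continuousOn_pi.2 fun j s hs => (hV.2 j s hs.1).continuousAt.continuousWithinAt
  obtain ⟨K, hK⟩ := isCompact_Icc.exists_bound_of_continuousOn hVcont
  refine ⟨(∑ j, M i j * K + |b i|) / |τ i|, fun s hs => ?_⟩
  rw [abs_div]
  refine div_le_div_of_nonneg_right ((abs_add_le _ _).trans (add_le_add ?_ le_rfl))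
    (abs_nonneg _)
  refine (abs_sum_le_sum_abs (fun j => Ψ s i j * V s j) univ).trans (sum_le_sum fun j _ => ?_)
  rw [abs_mul]
  exact mul_le_mul (hM s i j) ((norm_le_pi_norm (V s) j).trans (hK s hs)) (abs_nonneg _)
    ((abs_nonneg _).trans (hM s i j))

lemma hasDerivAt_dotProduct (hV : IsConstNetSolution τ Ψ b t₀ V) (hτ : ∀ i, τ i ≠ 0) :
    ∀ t ≥ t₀, HasDerivAt (fun s => τ ⬝ᵥ V s) (V t ⬝ᵥ (Ψ t *ᵥ V t + b)) t := by
  intro t ht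
  refine (HasDerivAt.fun_sum (u := univ) fun i _ => (hV.2 i t ht).const_mul (τ i)).congr_deriv ?_
  simp only [dotProduct, Pi.add_apply]
  exact sum_congr rfl fun i _ => mul_div_cancel₀ _ (hτ i)

theorem euclNorm_bounds {M : Matrix (Fin n) (Fin n) ℝ} {c κ ρ m R₁ : ℝ}
    (hV : IsConstNetSolution τ Ψ b t₀ V) (h₀ : euclNorm (V t₀) ≤ R₁) (hc : 0 < c)
    (hcτ : ∀ i, c ≤ τ i)
    (hM : ∀ t i j, |Ψ t i j| ≤ M i j) (hκ : 0 ≤ κ)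
    (hΨ : ∀ t x, x ⬝ᵥ Ψ t *ᵥ x ≤ -κ * euclNorm x ^ 2) (hρ : 0 < ρ)
    (hbρ : euclNorm b + 1 ≤ κ * ρ) (hm : euclNorm τ * ρ < m) :
    (∀ t ≥ t₀, euclNorm (V t) ≤ max (euclNorm τ * R₁) m / c) ∧
    ∀ T ≥ 0, euclNorm τ * R₁ - m ≤ ρ * T →
      ∀ t ≥ t₀ + T, euclNorm (V t) ≤ m / c := by
  have hW := hV.hasDerivAt_dotProduct fun i => (hc.trans_le (hcτ i)).ne'
  have hdecay : ∀ t ≥ t₀, m ≤ τ ⬝ᵥ V t → V t ⬝ᵥ (Ψ t *ᵥ V t + b) ≤ -ρ := fun t _ =>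
    dotProduct_mulVec_add_le_neg (hΨ t (V t)) hκ hbρ hm
  have hnorm : ∀ t ≥ t₀, euclNorm (V t) ≤ τ ⬝ᵥ V t / c := fun t ht =>
    (le_div_iff₀' hc).2 (mul_euclNorm_le_dotProduct hc.le hcτ (hV.nonneg hM t ht))
  have hW₀ : τ ⬝ᵥ V t₀ ≤ euclNorm τ * R₁ := (dotProduct_le_euclNorm_mul τ (V t₀)).trans
    (mul_le_mul_of_nonneg_left h₀ (euclNorm_nonneg τ))
  constructor
  · intro t ht
    have := le_max_of_hasDerivAt_neg_above hW
      (fun s hs hms => (hdecay s hs hms).trans_lt (neg_neg_of_pos hρ)) t ht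
    refine (hnorm t ht).trans (div_le_div_of_nonneg_right ?_ hc.le)
    exact this.trans (max_le_max_right m hW₀)
  · intro T hT hWT t ht
    refine (hnorm t ((le_add_of_nonneg_right hT).trans ht)).trans
      (div_le_div_of_nonneg_right ?_ hc.le)
    exact le_of_hasDerivAt_le_neg_above hW hdecay hρ hT (by linarith) t ht

end IsConstNetSolution

theorem constant_gain_network_uniformly_ultimately_bounded_general
    (n : ℕ)
    (B G : Fin n → Fin n → ℝ) (Bsh τ k : Fin n → ℝ)
    (hBsymm : ∀ i j, B i j = B j i)
    (hGsymm : ∀ i j, G i j = G j i)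
    (hBsh : ∀ i, 0 ≤ Bsh i)
    (hτ : ∀ i, 0 < τ i)
    (hk : ∀ i, 0 < k i)
    (b : Fin n → ℝ)
    (θ : ℝ → Fin n → ℝ)
    (Ψ : ℝ → Matrix (Fin n) (Fin n) ℝ)
    (hΨdiag : ∀ t i,
      Ψ t i i = -((Bsh i + ∑ j ∈ Finset.univ.erase i, |B i j|) + k i))
    (hΨoff : ∀ t i j, i ≠ j →
      Ψ t i j = G i j * Real.sin (θ t i - θ t j)
                + |B i j| * Real.cos (θ t i - θ t j)) :
    -- uniform boundedness
    (∀ R₁ > (0 : ℝ), ∃ R₂ > (0 : ℝ), ∀ (t₀ : ℝ) (V : ℝ → Fin n → ℝ),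
      IsConstNetSolution τ Ψ b t₀ V → euclNorm (V t₀) ≤ R₁ →
        ∀ t ≥ t₀, euclNorm (V t) ≤ R₂) ∧
    -- uniform ultimate boundedness
    (∃ R > (0 : ℝ), ∀ R₁ > (0 : ℝ), ∃ T > (0 : ℝ),
      ∀ (t₀ : ℝ) (V : ℝ → Fin n → ℝ),
        IsConstNetSolution τ Ψ b t₀ V → euclNorm (V t₀) ≤ R₁ →
          ∀ t ≥ t₀ + T, euclNorm (V t) ≤ R) := by
  obtain ⟨c, hc, hcτ⟩ := exists_pos_forall_le hτ
  obtain ⟨κ, hκ, hκk⟩ := exists_pos_forall_le hk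
  have hΨ : ∀ t x, x ⬝ᵥ Ψ t *ᵥ x ≤ -κ * euclNorm x ^ 2 := fun t =>
    network_dotProduct_mulVec_self_le hBsymm hGsymm hBsh hκk (hΨdiag t) (hΨoff t)
  set ρ := (euclNorm b + 1) / κ
  have hρ : 0 < ρ := div_pos (add_pos_of_nonneg_of_pos (euclNorm_nonneg b) one_pos) hκ
  have hbρ : euclNorm b + 1 ≤ κ * ρ := (mul_div_cancel₀ _ hκ.ne').ge
  -- `τ ⬝ᵥ V ≥ m` forces `‖V‖ ≥ ρ`, where `κ ‖V‖² - ‖b‖ ‖V‖ ≥ ‖V‖ ≥ ρ`.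
  set m := euclNorm τ * ρ + 1
  have hm : 0 < m := add_pos_of_nonneg_of_pos (mul_nonneg (euclNorm_nonneg τ) hρ.le) one_pos
  have hbounds := fun t₀ V R₁ (hV : IsConstNetSolution τ Ψ b t₀ V) (h₀ : euclNorm (V t₀) ≤ R₁) =>
    hV.euclNorm_bounds h₀ hc hcτ (fun t => network_abs_apply_le (hΨdiag t) (hΨoff t)) hκ.le hΨ
      hρ hbρ (lt_add_one _)
  have hT : ∀ {R₁ : ℝ}, 0 < R₁ → 0 < euclNorm τ * R₁ / ρ + 1 := fun hR₁ =>
    add_pos_of_nonneg_of_pos (div_nonneg (mul_nonneg (euclNorm_nonneg τ) hR₁.le) hρ.le) one_pos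
  refine ⟨fun R₁ _ => ⟨max (euclNorm τ * R₁) m / c, div_pos (lt_max_of_lt_right hm) hc,
      fun t₀ V hV h₀ => (hbounds t₀ V _ hV h₀).1⟩,
    m / c, div_pos hm hc, fun R₁ hR₁ => ⟨_, hT hR₁, fun t₀ V hV h₀ => ?_⟩⟩
  refine (hbounds t₀ V _ hV h₀).2 _ (hT hR₁).le ?_
  rw [mul_add, mul_div_cancel₀ _ hρ.ne', mul_one]
  linarith

/-- Uniform boundedness and uniform ultimate boundedness with
constant gains and references (Corollary 1). -/
theorem constant_gain_network_uniformly_ultimately_bounded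
    (n : ℕ) (hn : 1 ≤ n)
    (B G : Fin n → Fin n → ℝ) (Bsh τ k Vst : Fin n → ℝ)
    (hBsymm : ∀ i j, B i j = B j i)
    (hBle : ∀ i j, i ≠ j → B i j ≤ 0)
    (hGsymm : ∀ i j, G i j = G j i)
    (hGge : ∀ i j, i ≠ j → 0 ≤ G i j)
    (hBsh : ∀ i, 0 ≤ Bsh i)
    (hτ : ∀ i, 0 < τ i)
    (hk : ∀ i, 0 < k i)
    (hVst : ∀ i, 0 < Vst i)
    (b : Fin n → ℝ) (hb : ∀ i, b i = k i * Vst i)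
    (θ : ℝ → Fin n → ℝ)
    (hθC1 : ∀ i, ContDiff ℝ 1 (fun t => θ t i))
    (hθder : ∃ Mθ : ℝ, ∀ i t, |deriv (fun s => θ s i) t| ≤ Mθ)
    (Ψ : ℝ → Matrix (Fin n) (Fin n) ℝ)
    (hΨdiag : ∀ t i,
      Ψ t i i = -((Bsh i + ∑ j ∈ Finset.univ.erase i, |B i j|) + k i))
    (hΨoff : ∀ t i j, i ≠ j →
      Ψ t i j = G i j * Real.sin (θ t i - θ t j)
                + |B i j| * Real.cos (θ t i - θ t j)) :
    -- uniform boundedness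
    (∀ R₁ > (0 : ℝ), ∃ R₂ > (0 : ℝ), ∀ (t₀ : ℝ) (V : ℝ → Fin n → ℝ),
      IsConstNetSolution τ Ψ b t₀ V → euclNorm (V t₀) ≤ R₁ →
        ∀ t ≥ t₀, euclNorm (V t) ≤ R₂) ∧
    -- uniform ultimate boundedness
    (∃ R > (0 : ℝ), ∀ R₁ > (0 : ℝ), ∃ T > (0 : ℝ),
      ∀ (t₀ : ℝ) (V : ℝ → Fin n → ℝ),
        IsConstNetSolution τ Ψ b t₀ V → euclNorm (V t₀) ≤ R₁ →
          ∀ t ≥ t₀ + T, euclNorm (V t) ≤ R) :=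
  constant_gain_network_uniformly_ultimately_bounded_general n B G Bsh τ k hBsymm hGsymm hBsh hτ hk
    b θ Ψ hΨdiag hΨoff
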